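/- arXiv:math/0301384 — 2 statements merged into one kernel-verified Lean document; each statement's English description precedes it below -/
import Mathlib

section
/- For every ξ ∈ ℝ³ (regarded as a vector in ℂ³ with real coordinates) and every R > 0, there exist θ, θ′ ∈ M such that θ′ − θ = ξ, ‖θ‖ > R and ‖θ′‖ > R. -/
/-!
Write `θ = a + b i` with `a, b ∈ ℝ³`; then `θ ∈ M` iff `‖a‖² - ‖b‖² = 1` and `a ⊥ b`. Choose
orthonormal `e, f` orthogonal to `ξ` and put `θ = -ξ/2 + α e + β f i`, `θ' = ξ/2 + α e + β f i`
with `α² = 1 + β² - ‖ξ‖²/4`. Both lie on `M`, they differ by `ξ`, and their norms exceed `β`,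
which can be taken arbitrarily large.
-/

open Complex

/-- The bilinear "dot product" on `ℂ³` without complex conjugation. -/
noncomputable def cdot (θ w : EuclideanSpace ℂ (Fin 3)) : ℂ :=
  θ 0 * w 0 + θ 1 * w 1 + θ 2 * w 2

/-- The algebraic variety `M = {θ ∈ ℂ³ : θ·θ = 1}`. -/
noncomputable def M : Set (EuclideanSpace ℂ (Fin 3)) := {θ | cdot θ θ = 1}

open Module RealInnerProductSpace

theorem exists_orthonormal_orthogonal {E : Type*} [NormedAddCommGroup E] [InnerProductSpace ℝ E]
    [FiniteDimensional ℝ E] {n : ℕ} (hn : n + 1 ≤ finrank ℝ E) (ξ : E) :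
    ∃ v : Fin n → E, Orthonormal ℝ v ∧ ∀ i, ⟪ξ, v i⟫ = 0 := by
  have hK : n ≤ finrank ℝ (ℝ ∙ ξ)ᗮ := by
    have := Submodule.finrank_add_finrank_orthogonal (ℝ ∙ ξ)
    have : finrank ℝ (ℝ ∙ ξ) ≤ 1 := by simpa using finrank_span_le_card ({ξ} : Set E)
    omega
  let b := stdOrthonormalBasis ℝ (ℝ ∙ ξ)ᗮ
  refine ⟨fun i => (b (Fin.castLE hK i) : E), ?_, fun i => ?_⟩
  · exact (b.orthonormal.comp _ (Fin.castLE_injective hK)).comp_linearIsometry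
      (ℝ ∙ ξ)ᗮ.subtypeₗᵢ
  · exact Submodule.inner_right_of_mem_orthogonal (Submodule.mem_span_singleton_self ξ) (b _).2

variable {ι : Type*}

noncomputable def ofReIm (a b : EuclideanSpace ℝ ι) : EuclideanSpace ℂ ι :=
  WithLp.toLp 2 fun i => (a i : ℂ) + (b i : ℂ) * I

@[simp]
theorem ofReIm_zero_right (a : EuclideanSpace ℝ ι) :
    ofReIm a 0 = WithLp.toLp 2 fun i => (a i : ℂ) := by
  simp [ofReIm]

theorem ofReIm_sub (a b c d : EuclideanSpace ℝ ι) :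
    ofReIm a b - ofReIm c d = ofReIm (a - c) (b - d) := by
  ext i
  simp only [ofReIm, PiLp.sub_apply, ofReal_sub]
  ring

theorem norm_sq_ofReIm [Fintype ι] (a b : EuclideanSpace ℝ ι) :
    ‖ofReIm a b‖ ^ 2 = ‖a‖ ^ 2 + ‖b‖ ^ 2 := by
  simp only [EuclideanSpace.norm_sq_eq, ofReIm, Complex.sq_norm, normSq_add_mul_I,
    Real.norm_eq_abs, sq_abs, Finset.sum_add_distrib]

theorem cdot_ofReIm_self (a b : EuclideanSpace ℝ (Fin 3)) :
    cdot (ofReIm a b) (ofReIm a b) = ⟨‖a‖ ^ 2 - ‖b‖ ^ 2, 2 * ⟪a, b⟫⟩ := by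
  apply Complex.ext <;>
  simp [cdot, ofReIm, EuclideanSpace.norm_sq_eq, PiLp.inner_apply, Fin.sum_univ_three] <;>
  ring

theorem ofReIm_mem_M_iff (a b : EuclideanSpace ℝ (Fin 3)) :
    ofReIm a b ∈ M ↔ ‖a‖ ^ 2 - ‖b‖ ^ 2 = 1 ∧ ⟪a, b⟫ = 0 := by
  rw [M, Set.mem_ofPred_eq, cdot_ofReIm_self, Complex.ext_iff]
  simp

theorem norm_lt_norm_ofReIm_of_mem_M {a b : EuclideanSpace ℝ (Fin 3)} (h : ofReIm a b ∈ M) :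
    ‖b‖ < ‖ofReIm a b‖ := by
  have hM := ((ofReIm_mem_M_iff a b).1 h).1
  have hsq : ‖b‖ ^ 2 < ‖ofReIm a b‖ ^ 2 := by
    rw [norm_sq_ofReIm]
    linarith [sq_nonneg ‖b‖]
  exact (pow_lt_pow_iff_left₀ (norm_nonneg _) (norm_nonneg _) two_ne_zero).1 hsq

theorem ofReIm_mem_M_of_orthonormal {u : EuclideanSpace ℝ (Fin 3)}
    {v : Fin 2 → EuclideanSpace ℝ (Fin 3)} {α β : ℝ} (hv : Orthonormal ℝ v) (hu : ∀ i, ⟪u, v i⟫ = 0)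
    (hα : α ^ 2 = 1 + β ^ 2 - ‖u‖ ^ 2) : ofReIm (u + α • v 0) (β • v 1) ∈ M := by
  have hv01 : ⟪v 0, v 1⟫ = 0 := hv.2 (by decide)
  rw [ofReIm_mem_M_iff, norm_add_sq_real, norm_smul, norm_smul, inner_add_left, inner_smul_right,
    inner_smul_right, inner_smul_right, inner_smul_left, hu, hu, hv01, hv.1, hv.1]
  simp only [Real.norm_eq_abs, mul_pow, sq_abs]
  constructor
  · linarith
  · ring

theorem exists_large_theta_pair_general (ξ : EuclideanSpace ℝ (Fin 3)) (R : ℝ) :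
    ∃ θ ∈ M, ∃ θ' ∈ M,
      θ' - θ = (WithLp.toLp 2 (fun i => ((ξ i : ℂ))) : EuclideanSpace ℂ (Fin 3)) ∧
      ‖θ‖ > R ∧ ‖θ'‖ > R := by
  obtain ⟨v, hv, hξv⟩ := exists_orthonormal_orthogonal (n := 2) (by simp) ξ
  set u : EuclideanSpace ℝ (Fin 3) := (1 / 2 : ℝ) • ξ
  have hu : ∀ i, ⟪u, v i⟫ = 0 := fun i => by rw [inner_smul_left, hξv, mul_zero]
  have hu' : ∀ i, ⟪-u, v i⟫ = 0 := fun i => by rw [inner_neg_left, hu, neg_zero]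
  set β := |R| + ‖u‖
  set α := √(1 + β ^ 2 - ‖u‖ ^ 2)
  have hα : α ^ 2 = 1 + β ^ 2 - ‖u‖ ^ 2 :=
    Real.sq_sqrt (by nlinarith [norm_nonneg u, abs_nonneg R])
  have hθ := ofReIm_mem_M_of_orthonormal hv hu' (by rwa [norm_neg])
  have hθ' := ofReIm_mem_M_of_orthonormal hv hu hα
  have hRβ : R ≤ ‖β • v 1‖ := by
    rw [norm_smul, hv.1, mul_one, Real.norm_eq_abs]
    exact (le_abs_self R).trans ((le_add_of_nonneg_right (norm_nonneg u)).trans (le_abs_self β))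
  refine ⟨_, hθ, _, hθ', ?_, hRβ.trans_lt (norm_lt_norm_ofReIm_of_mem_M hθ),
    hRβ.trans_lt (norm_lt_norm_ofReIm_of_mem_M hθ')⟩
  have hdiff : (u + α • v 0) - (-u + α • v 0) = ξ := by simp only [u]; module
  rw [ofReIm_sub, hdiff, sub_self, ofReIm_zero_right]

/-- For every real vector `ξ ∈ ℝ³` (viewed inside `ℂ³`) and every `R > 0` there
exist `θ, θ′ ∈ M` with `θ′ − θ = ξ`, `‖θ‖ > R` and `‖θ′‖ > R`. -/
theorem exists_large_theta_pair (ξ : EuclideanSpace ℝ (Fin 3)) (R : ℝ) (hR : R > 0) :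
    ∃ θ ∈ M, ∃ θ' ∈ M,
      θ' - θ = (WithLp.toLp 2 (fun i => ((ξ i : ℂ))) : EuclideanSpace ℂ (Fin 3)) ∧
      ‖θ‖ > R ∧ ‖θ'‖ > R :=
  exists_large_theta_pair_general ξ R
end

section
/- The set D := {q ∈ L_{1,1} : sup_{r>0} r · |∫₀^r s q(s) ds| < ∞} is not dense in L_{1,1} with respect to the norm ‖q‖ = ∫₀^∞ r |q(r)| dr: there exist q ∈ L_{1,1} and ε > 0 such that ‖p − q‖ ≥ ε for every p ∈ D. (In particular, the set of potentials produced by the Newton–Sabatier scheme with ∑_{ℓ=0}^∞ |c_ℓ| < ∞, all of which have bounded K(r,r) = −(r/2)∫₀^r s q(s) ds, is not dense in L_{1,1}.) -/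
open MeasureTheory Filter

/-- Membership in the scattering class `L_{1,1}`: real-valued (measurable)
functions `q` on `(0, ∞)` with `∫₀^∞ r |q(r)| dr < ∞`. -/
def MemL11 (q : ℝ → ℝ) : Prop :=
  IntegrableOn (fun r => r * q r) (Set.Ioi (0 : ℝ))

/-- The norm `‖q‖ = ∫₀^∞ r |q(r)| dr` on `L_{1,1}`. -/
noncomputable def normL11 (q : ℝ → ℝ) : ℝ :=
  ∫ r in Set.Ioi (0 : ℝ), r * |q r|

/-- The linear functional `L(q) = ∫₀^∞ r q(r) dr`. -/
noncomputable def Lfun (q : ℝ → ℝ) : ℝ :=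
  ∫ r in Set.Ioi (0 : ℝ), r * q r

lemma q0_mul (r : ℝ) :
    r * (if r ∈ Set.Ioc (0:ℝ) 1 then (2:ℝ) else 0)
      = Set.indicator (Set.Ioc (0:ℝ) 1) (fun r => 2 * r) r := by
  by_cases h : r ∈ Set.Ioc (0:ℝ) 1 <;> simp [Set.indicator, h] <;> ring

lemma q0_int : MemL11 (fun r => if r ∈ Set.Ioc (0:ℝ) 1 then (2:ℝ) else 0) := by
  unfold MemL11
  simp only [q0_mul]
  refine (integrable_indicator_iff measurableSet_Ioc).2 ?_ |>.integrableOn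
  exact (continuous_const.mul continuous_id).integrableOn_Ioc

lemma q0_L : (∫ r in Set.Ioi (0:ℝ),
    r * (if r ∈ Set.Ioc (0:ℝ) 1 then (2:ℝ) else 0)) = 1 := by
  simp only [q0_mul]
  rw [setIntegral_indicator measurableSet_Ioc]
  have : Set.Ioi (0:ℝ) ∩ Set.Ioc 0 1 = Set.Ioc 0 1 := by
    exact Set.inter_eq_self_of_subset_right Set.Ioc_subset_Ioi_self
  rw [this, ← intervalIntegral.integral_of_le (by norm_num : (0:ℝ) ≤ 1),
    intervalIntegral.integral_const_mul, integral_id]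
  norm_num

/-- The set `D` of `q ∈ L_{1,1}` with `sup_{r>0} r·|∫₀^r s q(s) ds| < ∞`
(which contains all Newton–Sabatier potentials with `∑ |c_ℓ| < ∞`) is not dense
in `L_{1,1}`: some `q ∈ L_{1,1}` has distance `≥ ε > 0` from every `p ∈ D`. -/
theorem NS_potentials_not_dense :
    ∃ q : ℝ → ℝ, MemL11 q ∧ ∃ ε : ℝ, ε > 0 ∧
      ∀ p : ℝ → ℝ, MemL11 p →
        (∃ C : ℝ, ∀ r ∈ Set.Ioi (0 : ℝ),
          r * |∫ s in Set.Ioc (0 : ℝ) r, s * p s| ≤ C) →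
        ε ≤ ∫ r in Set.Ioi (0 : ℝ), r * |p r - q r| := by
  refine ⟨fun r => if r ∈ Set.Ioc (0:ℝ) 1 then (2:ℝ) else 0, q0_int, 1, one_pos, ?_⟩
  intro p hp ⟨C, hC⟩
  set q : ℝ → ℝ := fun r => if r ∈ Set.Ioc (0:ℝ) 1 then (2:ℝ) else 0 with hq
  -- L(p) = 0
  have hunion : (⋃ n : ℕ, Set.Ioc (0:ℝ) n) = Set.Ioi 0 := by
    ext x
    simp only [Set.mem_iUnion, Set.mem_Ioc, Set.mem_Ioi]
    constructor
    · rintro ⟨n, h1, _⟩; exact h1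
    · intro hx
      obtain ⟨n, hn⟩ := exists_nat_ge x
      exact ⟨n, hx, hn⟩
  have htend : Tendsto (fun n : ℕ => ∫ s in Set.Ioc (0:ℝ) n, s * p s) atTop
      (nhds (∫ s in Set.Ioi (0:ℝ), s * p s)) := by
    have := MeasureTheory.tendsto_setIntegral_of_monotone
      (s := fun n : ℕ => Set.Ioc (0:ℝ) n) (f := fun s => s * p s)
      (fun n => measurableSet_Ioc)
      (fun m n hmn => Set.Ioc_subset_Ioc_right (by exact_mod_cast hmn))
      (by rw [hunion]; exact hp)
    rwa [hunion] at this
  have htend0 : Tendsto (fun n : ℕ => ∫ s in Set.Ioc (0:ℝ) n, s * p s) atTop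
      (nhds 0) := by
    have hC0 : 0 ≤ C := le_trans (by positivity) (hC 1 (by norm_num))
    refine squeeze_zero_norm' ?_ (tendsto_const_div_atTop_nhds_zero_nat C)
    filter_upwards [eventually_ge_atTop 1] with n hn
    have hn' : (0:ℝ) < n := by exact_mod_cast hn
    have := hC n (Set.mem_Ioi.2 hn')
    rw [Real.norm_eq_abs, le_div_iff₀ hn', mul_comm]
    exact this
  have hLp : (∫ s in Set.Ioi (0:ℝ), s * p s) = 0 :=
    tendsto_nhds_unique htend htend0
  -- combine
  have hqint := q0_int
  have hsub : Integrable (fun r => r * p r - r * q r)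
      ((volume : Measure ℝ).restrict (Set.Ioi 0)) := hp.sub hqint
  have h1 : (∫ r in Set.Ioi (0:ℝ), (r * p r - r * q r)) = -1 := by
    rw [integral_sub hp hqint, hLp, q0_L]; ring
  have h2 : (1:ℝ) ≤ |∫ r in Set.Ioi (0:ℝ), (r * p r - r * q r)| := by
    rw [h1]; norm_num
  calc (1:ℝ) ≤ |∫ r in Set.Ioi (0:ℝ), (r * p r - r * q r)| := h2
    _ ≤ ∫ r in Set.Ioi (0:ℝ), |r * p r - r * q r| := by simpa using norm_integral_le_integral_norm (fun r => r * p r - r * q r)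
    _ = ∫ r in Set.Ioi (0:ℝ), r * |p r - q r| := by
        refine setIntegral_congr_fun measurableSet_Ioi (fun r hr => ?_)
        rw [← mul_sub, abs_mul, abs_of_pos (Set.mem_Ioi.1 hr)]
end
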